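/- The NSA iterates satisfy ∑_{k=1}^∞ (k+p)²·‖∇f(y_k)‖² < ∞. -/

import Mathlib

/-!
The energy `E_k = 2η(k+p-1)²(f x_k - f*) + p²‖z_k - x*‖²` decreases by at least
`η²(k+p)²‖∇f(y_k)‖²/3` per step. Expanding the `z`-update produces the cross term
`⟪∇f(y_k), p(z_k - x*)⟫ = k⟪∇f(y_k), y_k - x_k⟫ + p⟪∇f(y_k), y_k - x*⟫`, which convexity at `y_k`
bounds below by function gaps; the descent lemma bounds `f x_{k+1}` by a gradient step from `y_k`,
and `Lη ≤ 2/3` leaves a third of the quadratic term over. The weight `(k+p)k` that remains in front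
of `f x_k - f*` is at most `(k+p-1)²` since `p ≥ 2`. As `E_k ≥ 0`, the decrements are summable.
-/

open scoped RealInnerProductSpace

section Gradient

variable {E : Type*} [NormedAddCommGroup E] [InnerProductSpace ℝ E] [CompleteSpace E] {f : E → ℝ}

theorem hasDerivAt_comp_add_smul {a v : E} {t : ℝ} (hf : DifferentiableAt ℝ f (a + t • v)) :
    HasDerivAt (fun s : ℝ => f (a + s • v)) ⟪gradient f (a + t • v), v⟫ t := by
  have hline : HasDerivAt (fun s : ℝ => a + s • v) v t := by
    simpa using ((hasDerivAt_id t).smul_const v).const_add a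
  rw [inner_gradient_left]
  exact hf.hasFDerivAt.comp_hasDerivAt t hline

theorem ConvexOn.add_inner_gradient_le (hconv : ConvexOn ℝ Set.univ f) {a : E}
    (hf : DifferentiableAt ℝ f a) (w : E) :
    f a + ⟪gradient f a, w - a⟫ ≤ f w := by
  have hline : ConvexOn ℝ Set.univ (fun s : ℝ => f (a + s • (w - a))) := by
    have := (hconv.translate_right a).comp_linearMap ((LinearMap.id : ℝ →ₗ[ℝ] ℝ).smulRight (w - a))
    simp only [Set.preimage_univ, Function.comp_def, LinearMap.smulRight_apply,
      LinearMap.id_apply] at this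
    exact this
  have hderiv : HasDerivAt (fun s : ℝ => f (a + s • (w - a))) ⟪gradient f a, w - a⟫ 0 := by
    simpa using hasDerivAt_comp_add_smul (t := 0) (v := w - a) (by simpa using hf)
  have := hline.le_slope_of_hasDerivAt (Set.mem_univ 0) (Set.mem_univ 1) one_pos hderiv
  simp only [slope_def_field, one_smul, zero_smul, add_zero, sub_zero, div_one,
    add_sub_cancel] at this
  linarith

variable {L : ℝ} (hlip : ∀ x x' : E, ‖gradient f x - gradient f x'‖ ≤ L * ‖x - x'‖)
include hlip

theorem le_add_inner_gradient_add_sq (hf : Differentiable ℝ f) (a b : E) :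
    f b ≤ f a + ⟪gradient f a, b - a⟫ + L / 2 * ‖b - a‖ ^ 2 := by
  set v := b - a
  set g : ℝ → ℝ := fun t => f (a + t • v) - t * ⟪gradient f a, v⟫ - L / 2 * ‖v‖ ^ 2 * t ^ 2
  have hg : ∀ t, HasDerivAt g
      (⟪gradient f (a + t • v), v⟫ - ⟪gradient f a, v⟫ - L / 2 * ‖v‖ ^ 2 * (2 * t)) t := by
    intro t
    have hsq := (hasDerivAt_pow 2 t).const_mul (L / 2 * ‖v‖ ^ 2)
    simp only [Nat.cast_ofNat] at hsq
    exact ((hasDerivAt_comp_add_smul (hf _)).sub ((hasDerivAt_id t).mul_const _)).sub hsq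
      |>.congr_deriv (by simp)
  have hanti : AntitoneOn g (Set.Icc 0 1) := by
    refine antitoneOn_of_deriv_nonpos (convex_Icc 0 1)
      (fun t _ => (hg t).continuousAt.continuousWithinAt)
      (fun t _ => (hg t).differentiableAt.differentiableWithinAt) fun t ht => ?_
    rw [interior_Icc] at ht
    have hgrad : ⟪gradient f (a + t • v) - gradient f a, v⟫ ≤ L * t * ‖v‖ ^ 2 :=
      calc ⟪gradient f (a + t • v) - gradient f a, v⟫
          ≤ ‖gradient f (a + t • v) - gradient f a‖ * ‖v‖ := real_inner_le_norm _ _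
        _ ≤ L * ‖(a + t • v) - a‖ * ‖v‖ := by gcongr; exact hlip _ _
        _ = L * t * ‖v‖ ^ 2 := by
          rw [add_sub_cancel_left, norm_smul, Real.norm_of_nonneg ht.1.le]; ring
    rw [inner_sub_left] at hgrad
    rw [(hg t).deriv]
    linarith
  have h10 := hanti (by simp) (by simp) zero_le_one
  simp only [g, zero_smul, add_zero, one_smul, zero_mul, sub_zero, one_mul, one_pow, mul_one,
    zero_pow two_ne_zero, mul_zero, v, add_sub_cancel] at h10
  linarith

theorem le_sub_of_gradient_step (hf : Differentiable ℝ f) (a : E) (η : ℝ) :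
    f (a - η • gradient f a) ≤ f a - η * (1 - L * η / 2) * ‖gradient f a‖ ^ 2 := by
  have h := le_add_inner_gradient_add_sq hlip hf a (a - η • gradient f a)
  rw [sub_sub_cancel_left, inner_neg_right, real_inner_smul_right, real_inner_self_eq_norm_sq,
    norm_neg, norm_smul, Real.norm_eq_abs, mul_pow, sq_abs] at h
  linarith

end Gradient

theorem summable_of_add_le_of_nonneg {V a : ℕ → ℝ} (hV : ∀ k, 0 ≤ V k) (ha : ∀ k, 0 ≤ a k)
    (h : ∀ k, V (k + 1) + a k ≤ V k) : Summable a := by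
  refine summable_of_sum_range_le ha (c := V 0) fun N => ?_
  calc ∑ k ∈ Finset.range N, a k ≤ ∑ k ∈ Finset.range N, (V k - V (k + 1)) :=
        Finset.sum_le_sum fun k _ => by linarith [h k]
    _ = V 0 - V N := Finset.sum_range_sub' V N
    _ ≤ V 0 := by linarith [hV N]

theorem smul_sub_eq_of_eq_convexComb {E : Type*} [AddCommGroup E] [Module ℝ E] {t p : ℝ}
    (htp : t + p ≠ 0) {x y z : E} (hy : y = (1 - p / (t + p)) • x + (p / (t + p)) • z) (w : E) :
    p • (z - w) = t • (y - x) + p • (y - w) := by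
  subst hy
  match_scalars <;> field_simp
  ring

section NSA

variable {E : Type*} [NormedAddCommGroup E]

def nsaEnergy (f : E → ℝ) (xstar : E) (p η t : ℝ) (x z : E) : ℝ :=
  2 * η * (t + p - 1) ^ 2 * (f x - f xstar) + p ^ 2 * ‖z - xstar‖ ^ 2

variable {f : E → ℝ} {xstar : E} {p η : ℝ}

theorem nsaEnergy_nonneg (hmin : ∀ u, f xstar ≤ f u) (hη : 0 ≤ η) (t : ℝ) (x z : E) :
    0 ≤ nsaEnergy f xstar p η t x z := by
  have := sub_nonneg.2 (hmin x)
  unfold nsaEnergy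
  positivity

variable [InnerProductSpace ℝ E] [CompleteSpace E]

theorem nsaEnergy_succ_add_le (hconv : ConvexOn ℝ Set.univ f) (hf : Differentiable ℝ f)
    {L : ℝ} (hlip : ∀ x x' : E, ‖gradient f x - gradient f x'‖ ≤ L * ‖x - x'‖)
    (hmin : ∀ u, f xstar ≤ f u) (hp : 2 ≤ p) (hη : 0 < η) (hLη : L * η ≤ 2 / 3)
    {t : ℝ} (ht : 0 ≤ t) {x y z x' z' : E}
    (hy : y = (1 - p / (t + p)) • x + (p / (t + p)) • z)
    (hx' : f x' ≤ f (y - η • gradient f y))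
    (hz' : z' = z - (η * (t + p) / p) • gradient f y) :
    nsaEnergy f xstar p η (t + 1) x' z' + η ^ 2 / 3 * (t + p) ^ 2 * ‖gradient f y‖ ^ 2
      ≤ nsaEnergy f xstar p η t x z := by
  set g := gradient f y
  have hp0 : 0 < p := by linarith
  have hdescent : f x' ≤ f y - η * (1 - L * η / 2) * ‖g‖ ^ 2 :=
    hx'.trans (le_sub_of_gradient_step hlip hf y η)
  have hdist : p ^ 2 * ‖z' - xstar‖ ^ 2 = p ^ 2 * ‖z - xstar‖ ^ 2
      - 2 * η * (t + p) * ⟪g, p • (z - xstar)⟫ + η ^ 2 * (t + p) ^ 2 * ‖g‖ ^ 2 := by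
    rw [hz', sub_right_comm, norm_sub_sq_real, real_inner_smul_right, inner_smul_right,
      norm_smul, Real.norm_eq_abs, mul_pow, sq_abs, real_inner_comm]
    field_simp
  have hcross : t * (f y - f x) + p * (f y - f xstar) ≤ ⟪g, p • (z - xstar)⟫ := by
    have hx := hconv.add_inner_gradient_le (hf y) x
    have hxstar := hconv.add_inner_gradient_le (hf y) xstar
    rw [← neg_sub y x, inner_neg_right] at hx
    rw [← neg_sub y xstar, inner_neg_right] at hxstar
    rw [smul_sub_eq_of_eq_convexComb (by positivity) hy, inner_add_right, real_inner_smul_right,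
      real_inner_smul_right]
    gcongr <;> linarith
  have hweight : (t + p) * t ≤ (t + p - 1) ^ 2 := by nlinarith
  have hgap := sub_nonneg.2 (hmin x)
  unfold nsaEnergy
  rw [hdist, show t + 1 + p - 1 = t + p by ring]
  linarith [mul_le_mul_of_nonneg_left hcross (by positivity : 0 ≤ 2 * η * (t + p)),
    mul_le_mul_of_nonneg_left hdescent (by positivity : 0 ≤ 2 * η * (t + p) ^ 2),
    mul_le_mul_of_nonneg_left hweight (by positivity : 0 ≤ 2 * η * (f x - f xstar)),
    mul_nonneg (by positivity : 0 ≤ η ^ 2 * (t + p) ^ 2 * ‖g‖ ^ 2) (by linarith : 0 ≤ 2 / 3 - L * η)]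

end NSA

theorem nsa_stmt_9_general (n : ℕ)
    (f : EuclideanSpace ℝ (Fin n) → ℝ)
    (hconv : ConvexOn ℝ Set.univ f)
    (hdiff : Differentiable ℝ f)
    (L : ℝ) (hL : 0 < L)
    (hlip : ∀ x x' : EuclideanSpace ℝ (Fin n),
      ‖gradient f x - gradient f x'‖ ≤ L * ‖x - x'‖)
    (xstar : EuclideanSpace ℝ (Fin n)) (hmin : ∀ u, f xstar ≤ f u)
    (p : ℝ) (hp : 3 ≤ p)
    (η : ℝ) (hη0 : 0 < η) (hη : η ≤ 2 / (3 * L))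
    (α : ℕ → ℝ) (hα : ∀ k : ℕ, α k = p / (k + p))
    (x y z : ℕ → EuclideanSpace ℝ (Fin n))
    (hy : ∀ k, y k = (1 - α k) • x k + α k • z k)
    (hx : ∀ k, x (k + 1) =
      if f (y k - η • gradient f (y k)) ≤ f (x k - η • gradient f (x k))
      then y k - η • gradient f (y k)
      else x k - η • gradient f (x k))
    (hz : ∀ k, z (k + 1) = z k - (η / α k) • gradient f (y k))
    :
    Summable (fun k : ℕ => ((k : ℝ) + p) ^ 2 * ‖gradient f (y k)‖ ^ 2) := by
  have hLη : L * η ≤ 2 / 3 := by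
    rw [le_div_iff₀ (by positivity)] at hη
    linarith
  have hstep : ∀ k : ℕ, nsaEnergy f xstar p η (k + 1 : ℕ) (x (k + 1)) (z (k + 1))
      + η ^ 2 / 3 * ((k : ℝ) + p) ^ 2 * ‖gradient f (y k)‖ ^ 2
      ≤ nsaEnergy f xstar p η k (x k) (z k) := by
    intro k
    have hx' : f (x (k + 1)) ≤ f (y k - η • gradient f (y k)) := by
      rw [hx k]
      split_ifs with hxy
      exacts [le_rfl, not_le.1 hxy |>.le]
    have hz' : z (k + 1) = z k - (η * (k + p) / p) • gradient f (y k) := by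
      rw [hz k, hα k, div_div_eq_mul_div]
    push_cast
    exact nsaEnergy_succ_add_le hconv hdiff hlip hmin (by linarith) hη0 hLη k.cast_nonneg
      (hα k ▸ hy k) hx' hz'
  have hsum : Summable fun k : ℕ => η ^ 2 / 3 * (((k : ℝ) + p) ^ 2 * ‖gradient f (y k)‖ ^ 2) := by
    refine summable_of_add_le_of_nonneg (V := fun k => nsaEnergy f xstar p η k (x k) (z k))
      (fun k => nsaEnergy_nonneg hmin hη0.le _ _ _)
      (fun k => by positivity) fun k => ?_
    rw [← mul_assoc]
    exact hstep k
  exact (summable_mul_left_iff (by positivity)).mp hsum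

theorem nsa_stmt_9 (n : ℕ) (hn : 1 ≤ n)
    (f : EuclideanSpace ℝ (Fin n) → ℝ)
    (hconv : ConvexOn ℝ Set.univ f)
    (hdiff : Differentiable ℝ f)
    (L : ℝ) (hL : 0 < L)
    (hlip : ∀ x x' : EuclideanSpace ℝ (Fin n),
      ‖gradient f x - gradient f x'‖ ≤ L * ‖x - x'‖)
    (xstar : EuclideanSpace ℝ (Fin n)) (hmin : ∀ u, f xstar ≤ f u)
    (p : ℝ) (hp : 3 ≤ p)
    (η : ℝ) (hη0 : 0 < η) (hη : η ≤ 2 / (3 * L))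
    (α : ℕ → ℝ) (hα : ∀ k : ℕ, α k = p / (k + p))
    (x y z : ℕ → EuclideanSpace ℝ (Fin n))
    (hx0 : x 0 = z 0)
    (hy : ∀ k, y k = (1 - α k) • x k + α k • z k)
    (hx : ∀ k, x (k + 1) =
      if f (y k - η • gradient f (y k)) ≤ f (x k - η • gradient f (x k))
      then y k - η • gradient f (y k)
      else x k - η • gradient f (x k))
    (hz : ∀ k, z (k + 1) = z k - (η / α k) • gradient f (y k))
    :
    Summable (fun k : ℕ => ((k : ℝ) + p) ^ 2 * ‖gradient f (y k)‖ ^ 2) :=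
  nsa_stmt_9_general n f hconv hdiff L hL hlip xstar hmin p hp η hη0 hη α hα x y z hy hx hz
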